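/- arXiv:1501.04571 — 2 statements merged into one kernel-verified Lean document; each statement's English description precedes it below -/
import Mathlib

section
/- Let H₀ and V be hermitian n×n complex matrices and set H := H₀ + V. Let I ⊆ ℝ with spectrum(H₀) ∩ I nonempty, and let P₀ := P_I(H₀) be the spectral projection of H₀ onto I. Let κ be an eigenvalue of H with eigenprojection Q_κ(H), and suppose d := min_{λ ∈ spectrum(H₀) ∩ I} |κ − λ| > 0. Then ‖Q_κ(H) · P₀‖ ≤ ‖V‖ / d. (This is the basic spectral perturbation bound ‖Q_κ P₀‖ = O(ε) for eigenvalues κ outside the gapped sector.) -/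
open scoped Matrix.Norms.L2Operator

/-- The orthogonal projection (as a matrix) onto the eigenspace of `H` for the (real)
eigenvalue `κ`; it is `0` when `κ` is not an eigenvalue of `H`. -/
noncomputable def eigProj {n : Type*} [Fintype n] [DecidableEq n]
    (H : Matrix n n ℂ) (κ : ℝ) : Matrix n n ℂ :=
  Matrix.toEuclideanLin.symm
    ((Module.End.eigenspace (Matrix.toEuclideanLin H) (κ : ℂ)).subtype ∘ₗ
      (Submodule.orthogonalProjectionOnto (Module.End.eigenspace (Matrix.toEuclideanLin H) (κ : ℂ))).toLinearMap)

/-- The spectral projection of `H` onto a set `I ⊆ ℝ`, i.e. `Σ_{κ ∈ spectrum(H) ∩ I} Q_κ(H)`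
(the summands vanish off the spectrum, so the sum is finite). -/
noncomputable def specProj {n : Type*} [Fintype n] [DecidableEq n]
    (H : Matrix n n ℂ) (I : Set ℝ) : Matrix n n ℂ :=
  ∑ᶠ κ ∈ I, eigProj H κ

/-!
Write `Q` for the eigenprojection of `H = H₀ + V` at `κ` and `P_λ` for those of `H₀`. Since
`Q H = κ Q` (by self-adjointness of `H`) and `H₀ P_λ = λ P_λ`, we get `Q V P_λ = (κ - λ) Q P_λ`,
so `Q P₀ = Q V R` with `R = Σ_{λ ∈ spectrum(H₀) ∩ I} (κ - λ)⁻¹ P_λ`. The `P_λ` project onto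
mutually orthogonal subspaces, so by Bessel's inequality `‖R‖ ≤ 1 / d`, while `‖Q‖ ≤ 1`.
-/

open Module End RCLike
open scoped InnerProductSpace

namespace OrthogonalFamily

variable {𝕜 E ι : Type*} [RCLike 𝕜] [NormedAddCommGroup E] [InnerProductSpace 𝕜 E]
  {V : ι → Submodule 𝕜 E} [∀ i, (V i).HasOrthogonalProjection]

theorem sum_norm_sq_starProjection_le
    (hV : OrthogonalFamily 𝕜 (fun i => V i) fun i => (V i).subtypeₗᵢ) (s : Finset ι) (x : E) :
    ∑ i ∈ s, ‖(V i).starProjection x‖ ^ 2 ≤ ‖x‖ ^ 2 := by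
  set y := ∑ i ∈ s, (V i).starProjection x
  have hy : ‖y‖ ^ 2 = ∑ i ∈ s, ‖(V i).starProjection x‖ ^ 2 :=
    hV.norm_sum (fun i => (V i).orthogonalProjectionOnto x) s
  have hyx : re ⟪y, x⟫_𝕜 = ‖y‖ ^ 2 := by
    simp only [y, hy, sum_inner, map_sum, Submodule.re_inner_starProjection_eq_normSq]
    rfl
  have : ‖y‖ ^ 2 ≤ ‖y‖ * ‖x‖ := hyx ▸ re_inner_le_norm y x
  nlinarith [norm_nonneg y, norm_nonneg x]

theorem norm_sum_smul_starProjection_le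
    (hV : OrthogonalFamily 𝕜 (fun i => V i) fun i => (V i).subtypeₗᵢ) (s : Finset ι)
    {c : ι → 𝕜} {C : ℝ} (hC : 0 ≤ C) (hc : ∀ i ∈ s, ‖c i‖ ≤ C) :
    ‖∑ i ∈ s, c i • (V i).starProjection‖ ≤ C := by
  refine ContinuousLinearMap.opNorm_le_bound _ hC fun x => ?_
  refine (sq_le_sq₀ (norm_nonneg _) (by positivity)).mp ?_
  calc ‖(∑ i ∈ s, c i • (V i).starProjection) x‖ ^ 2
      = ∑ i ∈ s, ‖c i‖ ^ 2 * ‖(V i).starProjection x‖ ^ 2 := by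
        simpa [norm_smul, mul_pow] using
          hV.norm_sum (fun i => c i • (V i).orthogonalProjectionOnto x) s
    _ ≤ ∑ i ∈ s, C ^ 2 * ‖(V i).starProjection x‖ ^ 2 := by
        gcongr with i hi
        exact hc i hi
    _ ≤ C ^ 2 * ‖x‖ ^ 2 := by
        rw [← Finset.mul_sum]
        gcongr
        exact hV.sum_norm_sq_starProjection_le s x
    _ = (C * ‖x‖) ^ 2 := (mul_pow _ _ _).symm

end OrthogonalFamily

namespace ContinuousLinearMap

variable {𝕜 E : Type*} [RCLike 𝕜] [NormedAddCommGroup E] [InnerProductSpace 𝕜 E] [CompleteSpace E]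

theorem mul_starProjection_eigenspace (T : E →L[𝕜] E) (μ : 𝕜) :
    T * (eigenspace (T : End 𝕜 E) μ).starProjection
      = μ • (eigenspace (T : End 𝕜 E) μ).starProjection := by
  ext x
  exact mem_eigenspace_iff.mp ((eigenspace (T : End 𝕜 E) μ).starProjection_apply_mem x)

theorem starProjection_eigenspace_mul {T : E →L[𝕜] E} (hT : IsSelfAdjoint T) (μ : ℝ) :
    (eigenspace (T : End 𝕜 E) μ).starProjection * T
      = (μ : 𝕜) • (eigenspace (T : End 𝕜 E) μ).starProjection := by
  have h := congrArg star (mul_starProjection_eigenspace T (μ : 𝕜))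
  rwa [star_mul, star_smul, hT.star_eq, (isSelfAdjoint_starProjection _).star_eq,
    star_def, conj_ofReal] at h

theorem starProjection_eigenspace_mul_sub_mul {T : E →L[𝕜] E} (hT : IsSelfAdjoint T)
    (T₀ : E →L[𝕜] E) (κ lam : ℝ) :
    (eigenspace (T : End 𝕜 E) κ).starProjection * (T - T₀) *
        (eigenspace (T₀ : End 𝕜 E) lam).starProjection
      = ((κ - lam : ℝ) : 𝕜) • ((eigenspace (T : End 𝕜 E) κ).starProjection *
        (eigenspace (T₀ : End 𝕜 E) lam).starProjection) := by
  rw [mul_sub, sub_mul, starProjection_eigenspace_mul hT, mul_assoc,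
    mul_starProjection_eigenspace, smul_mul_assoc, mul_smul_comm, ofReal_sub, sub_smul]

theorem norm_starProjection_eigenspace_mul_sum_le {T₀ T : E →L[𝕜] E} (hT₀ : IsSelfAdjoint T₀)
    (hT : IsSelfAdjoint T) {κ d : ℝ} (hd : 0 < d) (s : Finset ℝ)
    (hs : ∀ lam ∈ s, d ≤ |κ - lam|) :
    ‖(eigenspace (T : End 𝕜 E) κ).starProjection *
        ∑ lam ∈ s, (eigenspace (T₀ : End 𝕜 E) lam).starProjection‖ ≤ ‖T - T₀‖ / d := by
  set Q := (eigenspace (T : End 𝕜 E) κ).starProjection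
  set P : ℝ → E →L[𝕜] E := fun lam => (eigenspace (T₀ : End 𝕜 E) lam).starProjection
  set R := ∑ lam ∈ s, ((κ - lam : ℝ) : 𝕜)⁻¹ • P lam
  have hgap : ∀ lam ∈ s, ((κ - lam : ℝ) : 𝕜) ≠ 0 := fun lam hlam h => by
    have := hs lam hlam
    rw [ofReal_eq_zero.mp h, abs_zero] at this
    linarith
  have hfactor : Q * ∑ lam ∈ s, P lam = Q * (T - T₀) * R := by
    rw [Finset.mul_sum, Finset.mul_sum]
    refine Finset.sum_congr rfl fun lam hlam => ?_
    rw [mul_smul_comm, starProjection_eigenspace_mul_sub_mul hT, smul_smul,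
      inv_mul_cancel₀ (hgap lam hlam), one_smul]
  have hR : ‖R‖ ≤ d⁻¹ := by
    refine (hT₀.isSymmetric.orthogonalFamily_eigenspaces.comp ofReal_injective)
      |>.norm_sum_smul_starProjection_le s (inv_nonneg.mpr hd.le) fun lam hlam => ?_
    rw [norm_inv, norm_ofReal]
    exact inv_anti₀ hd (hs lam hlam)
  calc ‖Q * ∑ lam ∈ s, P lam‖ = ‖Q * (T - T₀) * R‖ := by rw [hfactor]
    _ ≤ ‖Q‖ * ‖T - T₀‖ * ‖R‖ := norm_mul₃_le
    _ ≤ 1 * ‖T - T₀‖ * d⁻¹ := by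
        gcongr
        exact Submodule.starProjection_norm_le _
    _ = ‖T - T₀‖ / d := by rw [one_mul, div_eq_mul_inv]

end ContinuousLinearMap

section EigProj

variable {n : Type*} [Fintype n] [DecidableEq n]

theorem toEuclideanCLM_eigProj (H : Matrix n n ℂ) (κ : ℝ) :
    Matrix.toEuclideanCLM (n := n) (𝕜 := ℂ) (eigProj H κ)
      = (eigenspace (Matrix.toEuclideanCLM (n := n) (𝕜 := ℂ) H : End ℂ (EuclideanSpace ℂ n))
          (κ : ℂ)).starProjection :=
  ContinuousLinearMap.coe_injective (Matrix.toEuclideanLin.apply_symm_apply _)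

theorem eigProj_eq_zero_of_not_hasEigenvalue {H : Matrix n n ℂ} {κ : ℝ}
    (h : ¬ HasEigenvalue (Matrix.toEuclideanLin H) (κ : ℂ)) : eigProj H κ = 0 := by
  have hbot : eigenspace (Matrix.toEuclideanCLM (n := n) (𝕜 := ℂ) H : End ℂ (EuclideanSpace ℂ n))
      (κ : ℂ) = ⊥ :=
    not_ne_iff.mp (mt hasEigenvalue_iff.mpr h)
  apply EquivLike.injective (Matrix.toEuclideanCLM (n := n) (𝕜 := ℂ))
  simp only [toEuclideanCLM_eigProj, hbot, Submodule.starProjection_bot, map_zero]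

theorem exists_specProj_eq_sum (H : Matrix n n ℂ) (I : Set ℝ) :
    ∃ t : Finset ℝ, (∀ lam ∈ t, lam ∈ I ∧ HasEigenvalue (Matrix.toEuclideanLin H) (lam : ℂ)) ∧
      specProj H I = ∑ lam ∈ t, eigProj H lam := by
  have hsupp : Function.support (eigProj H) ⊆
      (fun lam : ℝ => (lam : ℂ)) ⁻¹' {μ | HasEigenvalue (Matrix.toEuclideanLin H) μ} :=
    fun _ hlam => by_contra fun h => hlam (eigProj_eq_zero_of_not_hasEigenvalue h)
  have hfin : (I ∩ Function.support (eigProj H)).Finite :=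
    ((finite_hasEigenvalue _).preimage Complex.ofReal_injective.injOn |>.subset hsupp)
      |>.inter_of_right I
  refine ⟨hfin.toFinset, fun lam hlam => ?_, finsum_mem_eq_sum _ hfin⟩
  rw [Set.Finite.mem_toFinset] at hlam
  exact ⟨hlam.1, hsupp hlam.2⟩

end EigProj

theorem eigenprojection_perturbation_bound_general
    {n : Type*} [Fintype n] [DecidableEq n]
    (H₀ V : Matrix n n ℂ) (hH₀ : H₀.IsHermitian) (hV : V.IsHermitian)
    (I : Set ℝ)
    (κ : ℝ)
    (d : ℝ) (hd : 0 < d)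
    (hdist : ∀ lam ∈ I,
      Module.End.HasEigenvalue (Matrix.toEuclideanLin H₀) (lam : ℂ) → d ≤ |κ - lam|) :
    ‖eigProj (H₀ + V) κ * specProj H₀ I‖ ≤ ‖V‖ / d := by
  obtain ⟨t, ht, hP₀⟩ := exists_specProj_eq_sum H₀ I
  have hnormV : ‖V‖ = ‖Matrix.toEuclideanCLM (n := n) (𝕜 := ℂ) (H₀ + V)
      - Matrix.toEuclideanCLM (n := n) (𝕜 := ℂ) H₀‖ := by
    rw [← map_sub, add_sub_cancel_left, Matrix.cstar_norm_def]
  rw [hnormV, Matrix.cstar_norm_def, map_mul, hP₀, map_sum]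
  simp only [toEuclideanCLM_eigProj]
  exact ContinuousLinearMap.norm_starProjection_eigenspace_mul_sum_le
    (hH₀.isSelfAdjoint.map _) ((hH₀.add hV).isSelfAdjoint.map _) hd t
    fun lam hlam => hdist lam (ht lam hlam).1 (ht lam hlam).2

/-- Basic spectral perturbation bound: if `κ` is an eigenvalue of `H = H₀ + V` at distance at
least `d > 0` from `spectrum(H₀) ∩ I`, then `‖Q_κ(H) P_I(H₀)‖ ≤ ‖V‖ / d`. -/
theorem eigenprojection_perturbation_bound
    {n : Type*} [Fintype n] [DecidableEq n]
    (H₀ V : Matrix n n ℂ) (hH₀ : H₀.IsHermitian) (hV : V.IsHermitian)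
    (I : Set ℝ)
    (hne : ∃ lam ∈ I, Module.End.HasEigenvalue (Matrix.toEuclideanLin H₀) (lam : ℂ))
    (κ : ℝ) (hκ : Module.End.HasEigenvalue (Matrix.toEuclideanLin (H₀ + V)) (κ : ℂ))
    (d : ℝ) (hd : 0 < d)
    (hdist : ∀ lam ∈ I,
      Module.End.HasEigenvalue (Matrix.toEuclideanLin H₀) (lam : ℂ) → d ≤ |κ - lam|) :
    ‖eigProj (H₀ + V) κ * specProj H₀ I‖ ≤ ‖V‖ / d :=
  eigenprojection_perturbation_bound_general H₀ V hH₀ hV I κ d hd hdist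
end

section
/- (Riesz projection equals spectral projection.) Let H be a hermitian n×n complex matrix, c ∈ ℂ and r > 0, and suppose no eigenvalue κ of H satisfies |κ − c| = r. Then the circle integral (2πi)⁻¹ · ∮_{|z−c|=r} (z·1 − H)⁻¹ dz equals Σ_{κ ∈ spectrum(H), |κ−c| < r} Q_κ(H), the spectral projection of H onto the open disc of radius r about c. -/
/-!
On the circle the resolvent has the partial-fraction form
`(z • 1 - H)⁻¹ = ∑ κ, (z - κ)⁻¹ • Q_κ(H)`, because the eigenprojections of a hermitian matrix
sum to `1` and satisfy `H * Q_κ(H) = κ • Q_κ(H)`. Integrating term by term, Cauchy's formula gives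
`(2πi)⁻¹ ∮ (z - κ)⁻¹ dz = 1` for `κ` inside the circle and Cauchy–Goursat gives `0` outside.
-/

open scoped Matrix.Norms.L2Operator
open Real

open Complex Metric

section CircleIntegral

variable {E : Type*} [NormedAddCommGroup E] [NormedSpace ℂ E] [CompleteSpace E]

theorem circleIntegral_sub_inv_of_notMem_closedBall {c w : ℂ} {R : ℝ} (hR : 0 ≤ R)
    (hw : w ∉ closedBall c R) : (∮ z in C(c, R), (z - w)⁻¹) = 0 := by
  have hne : ∀ z ∈ closedBall c R, z - w ≠ 0 := fun z hz h => hw (sub_eq_zero.mp h ▸ hz)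
  exact circleIntegral_eq_zero_of_differentiable_on_off_countable hR Set.countable_empty
    ((continuousOn_id.sub continuousOn_const).inv₀ hne)
    fun z hz => (differentiableAt_id.sub_const w).inv (hne z (ball_subset_closedBall hz.1))

open Classical in
theorem circleIntegral_sub_inv_of_notMem_sphere {c w : ℂ} {R : ℝ} (hR : 0 ≤ R)
    (hw : w ∉ sphere c R) :
    (∮ z in C(c, R), (z - w)⁻¹) = if w ∈ ball c R then 2 * π * I else 0 := by
  split_ifs with hball
  · exact circleIntegral.integral_sub_inv_of_mem_ball hball
  · refine circleIntegral_sub_inv_of_notMem_closedBall hR fun hcl => ?_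
    rw [← ball_union_sphere] at hcl
    exact hcl.elim hball hw

open Classical in
theorem circleIntegral_sum_sub_inv_smul {ι : Type*} (s : Finset ι) (a : ι → ℂ) (v : ι → E)
    {c : ℂ} {R : ℝ} (hR : 0 ≤ R) (ha : ∀ i ∈ s, a i ∉ sphere c R) :
    (∮ z in C(c, R), ∑ i ∈ s, (z - a i)⁻¹ • v i) =
      (2 * π * I : ℂ) • ∑ i ∈ s with a i ∈ ball c R, v i := by
  have hint : ∀ i ∈ s, CircleIntegrable (fun z => (z - a i)⁻¹ • v i) c R := fun i hi =>
    ContinuousOn.circleIntegrable hR <| ((continuousOn_id.sub (continuousOn_const (c := a i))).inv₀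
      fun z hz h => ha i hi ((sub_eq_zero.mp h : z = a i) ▸ hz)).smul continuousOn_const
  rw [circleIntegral.integral_fun_sum hint, Finset.smul_sum, Finset.sum_filter]
  refine Finset.sum_congr rfl fun i hi => ?_
  rw [circleIntegral.integral_smul_const, circleIntegral_sub_inv_of_notMem_sphere hR (ha i hi)]
  split_ifs <;> simp

end CircleIntegral

section EigProj

open Module.End

variable {n : Type*} [Fintype n] [DecidableEq n]

theorem toEuclideanLin_eigProj (H : Matrix n n ℂ) (κ : ℝ) :
    Matrix.toEuclideanLin (eigProj H κ) =
      ((eigenspace (Matrix.toEuclideanLin H) (κ : ℂ)).starProjection :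
        EuclideanSpace ℂ n →ₗ[ℂ] EuclideanSpace ℂ n) :=
  Matrix.toEuclideanLin.apply_symm_apply _

theorem mul_eigProj (H : Matrix n n ℂ) (κ : ℝ) : H * eigProj H κ = (κ : ℂ) • eigProj H κ := by
  refine Matrix.toEuclideanLin.injective (LinearMap.ext fun v => ?_)
  rw [Matrix.toLpLin_mul_same, map_smul, LinearMap.comp_apply, LinearMap.smul_apply,
    toEuclideanLin_eigProj]
  exact mem_eigenspace_iff.mp (Submodule.starProjection_apply_mem _ v)

namespace Matrix.IsHermitian

variable {H : Matrix n n ℂ} (hH : H.IsHermitian)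
include hH

theorem eigenvectorBasis_mem_eigenspace (j : n) :
    hH.eigenvectorBasis j ∈ eigenspace (Matrix.toEuclideanLin H) (hH.eigenvalues j : ℂ) := by
  rw [mem_eigenspace_iff]
  ext i
  simpa using congrFun (hH.mulVec_eigenvectorBasis j) i

theorem hasEigenvalue_eigenvalues (j : n) :
    HasEigenvalue (Matrix.toEuclideanLin H) (hH.eigenvalues j : ℂ) :=
  hasEigenvalue_of_hasEigenvector
    ⟨hH.eigenvectorBasis_mem_eigenspace j, hH.eigenvectorBasis.orthonormal.ne_zero j⟩

theorem eigenvectorBasis_mem_orthogonal_eigenspace {κ : ℝ} {j : n} (h : hH.eigenvalues j ≠ κ) :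
    hH.eigenvectorBasis j ∈ (eigenspace (Matrix.toEuclideanLin H) (κ : ℂ))ᗮ := fun w hw =>
  (Matrix.isSymmetric_toEuclideanLin_iff.mpr hH).orthogonalFamily_eigenspaces
    (fun hκ => h (by exact_mod_cast hκ.symm)) ⟨w, hw⟩
    ⟨_, hH.eigenvectorBasis_mem_eigenspace j⟩

theorem toEuclideanLin_eigProj_eigenvectorBasis (κ : ℝ) (j : n) :
    Matrix.toEuclideanLin (eigProj H κ) (hH.eigenvectorBasis j) =
      if hH.eigenvalues j = κ then hH.eigenvectorBasis j else 0 := by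
  rw [toEuclideanLin_eigProj, ContinuousLinearMap.coe_coe]
  split_ifs with h
  · exact Submodule.starProjection_eq_self_iff.mpr (h ▸ hH.eigenvectorBasis_mem_eigenspace j)
  · exact (Submodule.starProjection_apply_eq_zero_iff _).mpr
      (hH.eigenvectorBasis_mem_orthogonal_eigenspace h)

theorem eigProj_eq_zero_of_notMem {κ : ℝ} (hκ : κ ∉ Set.range hH.eigenvalues) :
    eigProj H κ = 0 := by
  refine Matrix.toEuclideanLin.injective (hH.eigenvectorBasis.toBasis.ext fun j => ?_)
  simpa [toEuclideanLin_eigProj_eigenvectorBasis hH] using fun h => absurd ⟨j, h⟩ hκ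

theorem sum_eigProj : ∑ κ ∈ Finset.univ.image hH.eigenvalues, eigProj H κ = 1 := by
  refine Matrix.toEuclideanLin.injective (hH.eigenvectorBasis.toBasis.ext fun j => ?_)
  simp [map_sum, toEuclideanLin_eigProj_eigenvectorBasis hH]

theorem specProj_eq_sum (I : Set ℝ) [DecidablePred (· ∈ I)] :
    specProj H I = ∑ κ ∈ Finset.univ.image hH.eigenvalues with κ ∈ I, eigProj H κ := by
  refine finsum_mem_eq_sum_of_inter_support_eq _ (Set.ext fun κ => ?_)
  simp only [Set.mem_inter_iff, Function.mem_support, Finset.coe_filter, Finset.mem_image,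
    Finset.mem_univ, true_and, Set.mem_ofPred_eq]
  exact ⟨fun ⟨hI, h0⟩ => ⟨⟨by_contra fun hκ => h0 (hH.eigProj_eq_zero_of_notMem hκ), hI⟩, h0⟩,
    fun ⟨⟨_, hI⟩, h0⟩ => ⟨hI, h0⟩⟩

theorem inv_smul_one_sub_eq_sum {z : ℂ} (hz : ∀ j, z ≠ hH.eigenvalues j) :
    (z • (1 : Matrix n n ℂ) - H)⁻¹ =
      ∑ κ ∈ Finset.univ.image hH.eigenvalues, (z - κ)⁻¹ • eigProj H κ := by
  refine Matrix.inv_eq_right_inv ?_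
  rw [Finset.mul_sum]
  refine (Finset.sum_congr rfl fun κ hκ => ?_).trans hH.sum_eigProj
  obtain ⟨j, -, rfl⟩ := Finset.mem_image.mp hκ
  rw [Matrix.mul_smul, Matrix.sub_mul, Matrix.smul_mul, Matrix.one_mul, mul_eigProj, ← sub_smul,
    smul_smul, inv_mul_cancel₀ (sub_ne_zero.mpr (hz j)), one_smul]

end Matrix.IsHermitian

end EigProj

/-- Riesz projection equals spectral projection: if no eigenvalue of the hermitian matrix `H`
lies on the circle `|z - c| = r`, then `(2πi)⁻¹ ∮_{|z-c|=r} (z·1 - H)⁻¹ dz` is the spectral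
projection of `H` onto the open disc of radius `r` about `c`. -/
theorem riesz_projection_eq_spectral_projection
    {n : Type*} [Fintype n] [DecidableEq n]
    (H : Matrix n n ℂ) (hH : H.IsHermitian) (c : ℂ) (r : ℝ) (hr : 0 < r)
    (hcirc : ∀ κ : ℝ, Module.End.HasEigenvalue (Matrix.toEuclideanLin H) (κ : ℂ) →
      ‖(κ : ℂ) - c‖ ≠ r) :
    (2 * (π : ℂ) * Complex.I)⁻¹ •
        (∮ z in C(c, r), (z • (1 : Matrix n n ℂ) - H)⁻¹) =
      specProj H {κ : ℝ | ‖(κ : ℂ) - c‖ < r} := by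
  have hoff : ∀ j, (hH.eigenvalues j : ℂ) ∉ sphere c r := fun j h =>
    hcirc _ (hH.hasEigenvalue_eigenvalues j) (by rwa [mem_sphere_iff_norm] at h)
  have hresolvent : Set.EqOn (fun z : ℂ => (z • (1 : Matrix n n ℂ) - H)⁻¹)
      (fun z => ∑ κ ∈ Finset.univ.image hH.eigenvalues, (z - κ)⁻¹ • eigProj H κ)
      (sphere c r) := fun z hz =>
    hH.inv_smul_one_sub_eq_sum fun j hj => hoff j (hj ▸ hz)
  rw [circleIntegral.integral_congr hr.le hresolvent,
    circleIntegral_sum_sub_inv_smul _ _ _ hr.le (by simpa using hoff), smul_smul,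
    inv_mul_cancel₀ two_pi_I_ne_zero, one_smul, hH.specProj_eq_sum]
  simp only [mem_ball_iff_norm, Set.mem_ofPred_eq]
end
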